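/- Fix an integer d ≥ 2 and let p be the up-sampled trinomial circular array of order d. Then for all n ≥ 0 and k ∈ ℤ, p_{n,k} = Σ_{j=0}^{n} C(n,j) · Σ_{m∈ℤ} C(j+1, 2dm − j + k), where the inner sum over m has only finitely many nonzero terms. -/
import Mathlib


/-- Binomial coefficient `C(n,x)` with integer lower argument, zero when `x < 0` or `x > n`. -/
noncomputable def binomZ (n : ℕ) (x : ℤ) : ℕ := if 0 ≤ x then n.choose x.toNat else 0

/-- Circular Pascal array of order `d` with initial offset `y0`:
`σ_{n,k} = Σ_{i=0}^{y0} Σ_{j∈ℤ} C(n, k − i + d·j)`. -/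
noncomputable def circPascal (d y0 n : ℕ) (k : ℤ) : ℕ :=
  ∑ i ∈ Finset.range (y0 + 1), ∑ᶠ j : ℤ, binomZ n (k - i + d * j)

/-- Up-sampled trinomial circular array of order `d`: row 0 is the indicator of
`k ≡ 0` or `1 (mod 2d)`, and `p_{n+1,k} = p_{n,k} + p_{n,k−1} + p_{n,k−2}`. -/
def trinomP (d : ℕ) : ℕ → ℤ → ℕ
  | 0, k => if (2 * (d : ℤ)) ∣ k ∨ (2 * (d : ℤ)) ∣ (k - 1) then 1 else 0
  | n + 1, k => trinomP d n k + trinomP d n (k - 1) + trinomP d n (k - 2)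

lemma binomZ_succ (n : ℕ) (x : ℤ) : binomZ (n+1) x = binomZ n x + binomZ n (x-1) := by
  unfold binomZ
  rcases lt_trichotomy x 0 with h|h|h
  · rw [if_neg (by omega), if_neg (by omega), if_neg (by omega)]
  · subst h; norm_num
  · rw [if_pos (by omega), if_pos (by omega), if_pos (by omega)]
    have : x.toNat = (x-1).toNat + 1 := by omega
    rw [this, Nat.choose_succ_succ]; rw [Nat.succ_eq_add_one]; omega

lemma binomZ_ne_zero {n : ℕ} {x : ℤ} (h : binomZ n x ≠ 0) : 0 ≤ x ∧ x ≤ n := by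
  unfold binomZ at h
  split at h
  · refine ⟨by assumption, ?_⟩
    by_contra hx
    exact h (Nat.choose_eq_zero_of_lt (by omega))
  · exact absurd rfl h

lemma supp_finite (d : ℕ) (hd : 1 ≤ d) (a : ℕ) (c : ℤ) :
    (Function.support fun m : ℤ => binomZ a (2*d*m + c)).Finite := by
  apply Set.Finite.subset (Set.finite_Icc (-(|c| + a)) (|c| + a))
  intro m hm
  have h := binomZ_ne_zero hm
  have h1 : -c ≤ 2*d*m := by linarith [h.1]
  have h2 : 2*d*m ≤ a - c := by linarith [h.2]
  have hc1 : -|c| ≤ c := neg_abs_le c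
  have hc2 : c ≤ |c| := le_abs_self c
  have hd' : (1:ℤ) ≤ d := by exact_mod_cast hd
  constructor
  · nlinarith [h1, hc2]
  · nlinarith [h2, hc1]

lemma supp_finite' (d : ℕ) (hd : 1 ≤ d) (a : ℕ) (b c : ℤ) :
    (Function.support fun m : ℤ => binomZ a (2*d*m - b + c)).Finite := by
  have h := supp_finite d hd a (c - b)
  have he : (fun m : ℤ => binomZ a (2*d*m - b + c)) = fun m : ℤ => binomZ a (2*d*m + (c - b)) := by
    funext m; congr 1; ring
  rw [he]; exact h

noncomputable def S (d j : ℕ) (k : ℤ) : ℕ := ∑ᶠ m : ℤ, binomZ (j + 1) (2 * d * m - j + k)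

lemma S_succ (d : ℕ) (hd : 1 ≤ d) (j : ℕ) (k : ℤ) :
    S d (j+1) k = S d j (k-1) + S d j (k-2) := by
  unfold S
  have h1 : ∀ m : ℤ, binomZ (j+1+1) (2*d*m - (j+1:ℕ) + k)
      = binomZ (j+1) (2*d*m - j + (k-1)) + binomZ (j+1) (2*d*m - j + (k-2)) := by
    intro m
    rw [show (2*(d:ℤ)*m - ((j+1:ℕ):ℤ) + k) = (2*d*m - j + (k-1)) from by push_cast; ring,
      binomZ_succ, show (2*(d:ℤ)*m - j + (k-1)) - 1 = 2*d*m - j + (k-2) from by ring]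
  rw [finsum_congr h1]
  exact finsum_add_distrib (supp_finite' d hd _ j (k-1)) (supp_finite' d hd _ j (k-2))

lemma binomZ_one (x : ℤ) : binomZ 1 x = if x = 0 ∨ x = 1 then 1 else 0 := by
  unfold binomZ
  rcases lt_trichotomy x 0 with h|h|h
  · rw [if_neg (by omega), if_neg (by omega)]
  · subst h; norm_num
  · rw [if_pos (by omega)]
    by_cases h1 : x = 1
    · subst h1; norm_num
    · rw [if_neg (by omega)]
      exact Nat.choose_eq_zero_of_lt (by omega)

lemma S_zero (d : ℕ) (hd : 2 ≤ d) (k : ℤ) :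
    S d 0 k = if (2 * (d:ℤ)) ∣ k ∨ (2 * (d:ℤ)) ∣ (k - 1) then 1 else 0 := by
  have hd' : (2:ℤ) ≤ d := by exact_mod_cast hd
  unfold S
  simp only [Nat.cast_zero, sub_zero]
  by_cases hk : (2 * (d:ℤ)) ∣ k
  · obtain ⟨t, ht⟩ := hk
    rw [if_pos (Or.inl ⟨t, ht⟩)]
    rw [finsum_eq_single _ (-t)]
    · rw [show 2*(d:ℤ)*(-t) + k = 0 from by rw [ht]; ring, binomZ_one]; norm_num
    · intro x hx
      rw [binomZ_one, if_neg]
      push_neg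
      have harg : 2*(d:ℤ)*x + k = 2*d*(x + t) := by rw [ht]; ring
      have hxt : x + t ≠ 0 := by intro h0; apply hx; omega
      constructor <;> rw [harg]
      · intro h0
        rcases lt_or_gt_of_ne hxt with h|h <;> nlinarith
      · intro h0
        rcases lt_or_gt_of_ne hxt with h|h <;> nlinarith
  · by_cases hk1 : (2 * (d:ℤ)) ∣ (k - 1)
    · obtain ⟨t, ht⟩ := hk1
      rw [if_pos (Or.inr ⟨t, ht⟩)]
      rw [finsum_eq_single _ (-t)]
      · rw [show 2*(d:ℤ)*(-t) + k = 1 from by linarith, binomZ_one]; norm_num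
      · intro x hx
        rw [binomZ_one, if_neg]
        push_neg
        have harg : 2*(d:ℤ)*x + k = 2*d*(x + t) + 1 := by
          rw [show (2:ℤ)*d*(x+t) = 2*d*x + 2*d*t from by ring]; linarith
        have hxt : x + t ≠ 0 := by intro h0; apply hx; omega
        constructor <;> rw [harg]
        · intro h0
          rcases lt_or_gt_of_ne hxt with h|h <;> nlinarith
        · intro h0
          rcases lt_or_gt_of_ne hxt with h|h <;> nlinarith
    · rw [if_neg (by tauto)]
      apply finsum_eq_zero_of_forall_eq_zero
      intro m
      rw [binomZ_one, if_neg]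
      push_neg
      constructor
      · intro h0
        exact hk ⟨-m, by rw [show (2:ℤ)*d*(-m) = -(2*d*m) from by ring]; linarith⟩
      · intro h0
        exact hk1 ⟨-m, by rw [show (2:ℤ)*d*(-m) = -(2*d*m) from by ring]; linarith⟩

/-- Theorem (three-choice arrays): for the up-sampled trinomial circular array of order `d`,
`p_{n,k} = Σ_{j=0}^{n} C(n,j) Σ_{m∈ℤ} C(j+1, 2dm − j + k)`. -/
theorem trinomP_formula (d : ℕ) (hd : 2 ≤ d) (n : ℕ) (k : ℤ) :
    trinomP d n k =
      ∑ j ∈ Finset.range (n + 1),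
        n.choose j * ∑ᶠ m : ℤ, binomZ (j + 1) (2 * d * m - j + k) := by
  have hd1 : 1 ≤ d := by omega
  induction n generalizing k with
  | zero =>
    show trinomP d 0 k = ∑ j ∈ Finset.range 1, Nat.choose 0 j * S d j k
    rw [Finset.sum_range_one, Nat.choose_self, one_mul, S_zero d hd k]
    rfl
  | succ n ih =>
    show trinomP d (n+1) k = ∑ j ∈ Finset.range (n + 2), (n+1).choose j * S d j k
    have ih' : ∀ k' : ℤ, trinomP d n k' = ∑ j ∈ Finset.range (n + 1), n.choose j * S d j k' :=
      fun k' => ih k'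
    show trinomP d n k + trinomP d n (k - 1) + trinomP d n (k - 2) = _
    rw [ih' k, ih' (k-1), ih' (k-2)]
    rw [← Finset.sum_add_distrib, ← Finset.sum_add_distrib]
    have lhs_eq : ∀ j ∈ Finset.range (n+1),
        n.choose j * S d j k + n.choose j * S d j (k-1) + n.choose j * S d j (k-2)
        = n.choose j * S d j k + n.choose j * S d (j+1) k := by
      intro j _
      rw [S_succ d hd1 j k, Nat.mul_add]
      ring
    rw [Finset.sum_congr rfl lhs_eq]
    rw [Finset.sum_add_distrib]
    -- RHS manipulation
    rw [Finset.sum_range_succ' (fun j => (n+1).choose j * S d j k) (n+1)]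
    simp only [Nat.choose_succ_succ', Nat.choose_zero_right, one_mul, Nat.add_mul]
    rw [Finset.sum_add_distrib]
    have h2 : ∑ j ∈ Finset.range (n+1), n.choose (j+1) * S d (j+1) k + S d 0 k
        = ∑ j ∈ Finset.range (n+1), n.choose j * S d j k := by
      have := Finset.sum_range_succ' (fun j => n.choose j * S d j k) (n+1)
      rw [Finset.sum_range_succ (fun j => n.choose j * S d j k) (n+1)] at this
      simp only [Nat.choose_succ_self, zero_mul, add_zero, Nat.choose_zero_right, one_mul] at this
      omega
    omega
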